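/- Let G be an α_i-metric graph. Every vertex v that is not in the center C(G) has locality at most i+1, i.e., there exists a vertex x with e(x) < e(v) and d(v,x) ≤ i+1. -/

import Mathlib

/-!
Take any `x` with `e(x) < e(v)`; if `d(v,x) ≥ i+2`, let `z ∈ I(v,x)` with `d(v,z) = i+1`. For any `u`,
walk from `z` towards `x` along a geodesic: at the first step where the distance to `u` decreases,
say from `z'` to its successor `z''`, the `α_i` condition for `(u, z'', z', v)` forces
`d(u,z') < d(u,v)`, since `d(v,z') > i`. Hence `d(u,z) ≤ max (d(u,x), d(u,v) - 1)`, so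
`e(z) < e(v)`, and `z` is the required vertex.
-/

open SimpleGraph

variable {V : Type*}

/-- `Itv G u v x` means `x` lies on a shortest `(u,v)`-path, i.e. `x ∈ I(u,v)`. -/
def Itv (G : SimpleGraph V) (u v x : V) : Prop :=
  G.dist u x + G.dist x v = G.dist u v

/-- `G` is an `α_i`-metric graph. -/
def AlphaI (G : SimpleGraph V) (i : ℕ) : Prop :=
  ∀ u v w x : V, Itv G u w v → Itv G v x w → G.Adj v w →
    G.dist u v + G.dist v x ≤ G.dist u x + i

/-- Eccentricity of a vertex. -/
noncomputable def ecc (G : SimpleGraph V) [Fintype V] (v : V) : ℕ :=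
  Finset.univ.sup (fun u => G.dist v u)

/-- Radius of the graph. -/
noncomputable def grad (G : SimpleGraph V) [Fintype V] [Nonempty V] : ℕ :=
  Finset.univ.inf' Finset.univ_nonempty (fun v => ecc G v)

/-- Diameter of the graph. -/
noncomputable def gdiam (G : SimpleGraph V) [Fintype V] : ℕ :=
  Finset.univ.sup (fun v => ecc G v)

variable {G : SimpleGraph V}

lemma SimpleGraph.Adj.dist_le_dist_add_one {v w : V} (h : G.Adj v w) (u : V) :
    G.dist u w ≤ G.dist u v + 1 := by
  simpa [dist_eq_one_iff_adj.mpr h] using h.reachable.dist_triangle_right u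

lemma SimpleGraph.Reachable.exists_adj_dist_add_one_eq {z x : V} (h : G.Reachable z x)
    (hne : z ≠ x) : ∃ w, G.Adj z w ∧ G.dist w x + 1 = G.dist z x := by
  obtain ⟨p, hp⟩ := h.exists_walk_length_eq_dist
  cases p with
  | nil => exact absurd rfl hne
  | @cons _ w _ hadj q =>
    refine ⟨w, hadj, le_antisymm ?_ ?_⟩
    · simpa [← hp] using dist_le q
    · simpa [dist_comm, add_comm] using hadj.symm.dist_le_dist_add_one x

lemma SimpleGraph.Connected.exists_itv_dist_eq (hG : G.Connected) {v x : V} {k : ℕ}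
    (hk : k ≤ G.dist v x) : ∃ z, Itv G v x z ∧ G.dist v z = k := by
  induction k with
  | zero => exact ⟨v, by simp [Itv], dist_self⟩
  | succ k ih =>
    obtain ⟨z, hz, hvz⟩ := ih (by omega)
    have hne : z ≠ x := by
      rintro rfl
      simp only [Itv, dist_self, add_zero] at hz
      omega
    obtain ⟨w, hzw, hwx⟩ := (hG z x).exists_adj_dist_add_one_eq hne
    have hvw := hzw.dist_le_dist_add_one v
    have hvx : G.dist v x ≤ G.dist v w + G.dist w x := hG.dist_triangle
    unfold Itv at hz ⊢
    exact ⟨w, by omega, by omega⟩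

lemma AlphaI.dist_le_or_dist_lt {i : ℕ} (hG : G.Connected) (hα : AlphaI G i) (u : V)
    {v x z : V} (hz : Itv G v x z) (hi : i < G.dist v z) :
    G.dist u z ≤ G.dist u x ∨ G.dist u z < G.dist u v := by
  induction hn : G.dist z x generalizing z with
  | zero =>
    rw [(hG.dist_eq_zero_iff).mp hn]
    exact Or.inl le_rfl
  | succ n ih =>
    have hne : z ≠ x := by rintro rfl; simp at hn
    obtain ⟨w, hzw, hwx⟩ := (hG z x).exists_adj_dist_add_one_eq hne
    have hvw := hzw.dist_le_dist_add_one v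
    have hvx : G.dist v x ≤ G.dist v w + G.dist w x := hG.dist_triangle
    unfold Itv at hz
    have hvw_eq : G.dist v w = G.dist v z + 1 := by omega
    by_cases hdesc : G.dist u z ≤ G.dist u w
    · rcases ih (z := w) (by unfold Itv; omega) (by omega) (by omega) with h | h
      · exact Or.inl (hdesc.trans h)
      · exact Or.inr (hdesc.trans_lt h)
    · -- the distance to `u` drops from `z` to `w`, so `w ∈ I(u,z)`; and `z ∈ I(w,v)`
      have huz : G.dist u z = G.dist u w + 1 := by
        have := hzw.symm.dist_le_dist_add_one u
        omega
      have hwz : G.dist w z = 1 := dist_eq_one_iff_adj.mpr hzw.symm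
      have key := hα u w z v (by unfold Itv; omega)
        (by unfold Itv; rw [hwz, dist_comm, dist_comm (u := w), hvw_eq]; omega) hzw.symm
      rw [dist_comm (u := w), hvw_eq] at key
      exact Or.inr (by omega)

lemma dist_le_ecc [Fintype V] (v u : V) : G.dist v u ≤ ecc G v :=
  Finset.le_sup (Finset.mem_univ u)

lemma exists_dist_eq_ecc [Fintype V] (v : V) : ∃ u, G.dist v u = ecc G v := by
  obtain ⟨u, -, hu⟩ := Finset.exists_mem_eq_sup Finset.univ ⟨v, Finset.mem_univ v⟩ (G.dist v)
  exact ⟨u, hu.symm⟩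

lemma AlphaI.ecc_lt_of_itv [Fintype V] {i : ℕ} (hG : G.Connected)
    (hα : AlphaI G i) {v x z : V} (hx : ecc G x < ecc G v) (hz : Itv G v x z)
    (hi : i < G.dist v z) : ecc G z < ecc G v := by
  obtain ⟨u, hu⟩ := exists_dist_eq_ecc (G := G) z
  have hux : G.dist u x ≤ ecc G x := dist_comm (G := G) ▸ dist_le_ecc x u
  have huv : G.dist u v ≤ ecc G v := dist_comm (G := G) ▸ dist_le_ecc v u
  rw [← hu, dist_comm]
  rcases hα.dist_le_or_dist_lt hG u hz hi with h | h <;> omega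

lemma exists_ecc_lt_of_ne_grad [Fintype V] [Nonempty V] {v : V} (hv : ecc G v ≠ grad G) :
    ∃ x, ecc G x < ecc G v := by
  obtain ⟨x, -, hx⟩ := Finset.exists_mem_eq_inf' Finset.univ_nonempty (ecc G)
  exact ⟨x, hx ▸ lt_of_le_of_ne (Finset.inf'_le _ (Finset.mem_univ v)) (Ne.symm hv)⟩

theorem stmt_9 [Fintype V] [Nonempty V] (G : SimpleGraph V) (hG : G.Connected) (i : ℕ)
    (hα : AlphaI G i) (v : V) (hv : ecc G v ≠ grad G) :
    ∃ x : V, ecc G x < ecc G v ∧ G.dist v x ≤ i + 1 := by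
  obtain ⟨x, hx⟩ := exists_ecc_lt_of_ne_grad hv
  by_cases hvx : G.dist v x ≤ i + 1
  · exact ⟨x, hx, hvx⟩
  obtain ⟨z, hz, hvz⟩ := hG.exists_itv_dist_eq (v := v) (x := x) (k := i + 1) (by omega)
  exact ⟨z, hα.ecc_lt_of_itv hG hx hz (by omega), hvz.le⟩
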